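/- Let X and Y be A-bounded operators on H admitting A-adjoints (i.e. there exist Xs, Ys with A∘Xs = X*∘A and A∘Ys = Y*∘A). Then w_𝔸([[0,X],[Y,0]]) ≤ (‖X‖_A + ‖Y‖_A)/2. -/

import Mathlib

noncomputable def sInner {E : Type*} [NormedAddCommGroup E] [InnerProductSpace ℂ E]
    (A : E →L[ℂ] E) (x y : E) : ℂ := inner ℂ (A x) y

noncomputable def sNorm {E : Type*} [NormedAddCommGroup E] [InnerProductSpace ℂ E]
    (A : E →L[ℂ] E) (x : E) : ℝ := Real.sqrt (sInner A x x).re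

/-- The `A`-operator seminorm. -/
noncomputable def opSNorm {E : Type*} [NormedAddCommGroup E] [InnerProductSpace ℂ E]
    (A T : E →L[ℂ] E) : ℝ := sSup {c | ∃ x : E, sNorm A x = 1 ∧ c = sNorm A (T x)}

/-- The `A`-numerical radius. -/
noncomputable def numRad {E : Type*} [NormedAddCommGroup E] [InnerProductSpace ℂ E]
    (A T : E →L[ℂ] E) : ℝ := sSup {c | ∃ x : E, sNorm A x = 1 ∧ c = ‖sInner A (T x) x‖}

/-- `T` is `A`-bounded. -/
def ABounded {E : Type*} [NormedAddCommGroup E] [InnerProductSpace ℂ E]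
    (A T : E →L[ℂ] E) : Prop := ∃ c > 0, ∀ x : E, sNorm A (T x) ≤ c * sNorm A x

/-- The 2×2 block operator `[[T, X], [Y, S]]` on `H ⊕ H` (with the ℓ² product structure). -/
noncomputable def blk {H : Type*} [NormedAddCommGroup H] [InnerProductSpace ℂ H]
    (T X Y S : H →L[ℂ] H) : WithLp 2 (H × H) →L[ℂ] WithLp 2 (H × H) :=
  ((WithLp.prodContinuousLinearEquiv 2 ℂ H H).symm.toContinuousLinearMap.comp
    (((T.coprod X).prod (Y.coprod S)).comp
      (WithLp.prodContinuousLinearEquiv 2 ℂ H H).toContinuousLinearMap))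

/-- The diagonal operator `𝔸 = diag(A, A)` on `H ⊕ H`. -/
noncomputable def twoA {H : Type*} [NormedAddCommGroup H] [InnerProductSpace ℂ H]
    (A : H →L[ℂ] H) : WithLp 2 (H × H) →L[ℂ] WithLp 2 (H × H) := blk A 0 0 A

/-!
For a unit vector `z = (x, y)` of `H ⊕ H` we have `⟨[[0,X],[Y,0]] z, z⟩_𝔸 = ⟨X y, x⟩_A + ⟨Y x, y⟩_A`.
Cauchy–Schwarz for the semi-inner product `⟨·,·⟩_A` bounds this by `(‖X‖_A + ‖Y‖_A) ‖x‖_A ‖y‖_A`,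
and `‖x‖_A ‖y‖_A ≤ 1/2` because `‖x‖_A² + ‖y‖_A² = 1`.
-/

section SemiInner

variable {E : Type*} [NormedAddCommGroup E] [InnerProductSpace ℂ E] {A : E →L[ℂ] E}

lemma sNorm_nonneg (A : E →L[ℂ] E) (x : E) : 0 ≤ sNorm A x := Real.sqrt_nonneg _

lemma sNorm_sq (hA : A.IsPositive) (x : E) : sNorm A x ^ 2 = (sInner A x x).re :=
  Real.sq_sqrt (hA.re_inner_nonneg_left x)

lemma sNorm_smul (A : E →L[ℂ] E) (t : ℂ) (x : E) : sNorm A (t • x) = ‖t‖ * sNorm A x := by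
  unfold sNorm sInner
  rw [map_smul, inner_smul_left, inner_smul_right, ← mul_assoc, RCLike.conj_mul,
    ← RCLike.ofReal_pow, ← RCLike.re_to_complex, RCLike.re_ofReal_mul,
    Real.sqrt_mul (sq_nonneg _), Real.sqrt_sq (norm_nonneg t), RCLike.re_to_complex]

lemma norm_sInner_le (hA : A.IsPositive) (x y : E) :
    ‖sInner A x y‖ ≤ sNorm A x * sNorm A y :=
  let semiInner : PreInnerProductSpace.Core ℂ E :=
    { inner := sInner A
      conj_inner_symm x y := by simp only [sInner, inner_conj_symm, hA.inner_left_eq_inner_right]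
      re_inner_nonneg := hA.re_inner_nonneg_left
      add_left x y z := by simp [sInner]
      smul_left x y r := by simp [sInner, mul_comm] }
  InnerProductSpace.Core.norm_inner_le_norm (c := semiInner) x y

lemma opSNorm_nonneg (A T : E →L[ℂ] E) : 0 ≤ opSNorm A T :=
  Real.sSup_nonneg fun _ ⟨x, _, hc⟩ => hc ▸ sNorm_nonneg A (T x)

lemma sNorm_apply_le_opSNorm_mul {T : E →L[ℂ] E} (hT : ABounded A T) (v : E) :
    sNorm A (T v) ≤ opSNorm A T * sNorm A v := by
  obtain ⟨c, -, hc⟩ := hT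
  rcases (sNorm_nonneg A v).eq_or_lt with hv | hv
  · rw [← hv, mul_zero]
    simpa [← hv] using hc v
  have hbdd : BddAbove {d | ∃ x : E, sNorm A x = 1 ∧ d = sNorm A (T x)} :=
    ⟨c, fun _ ⟨x, hx, hd⟩ => by simpa [hd, hx] using hc x⟩
  have hnorm : ‖((sNorm A v : ℂ))⁻¹‖ = (sNorm A v)⁻¹ := by
    rw [norm_inv, Complex.norm_real, Real.norm_of_nonneg hv.le]
  have hunit : sNorm A (((sNorm A v : ℂ))⁻¹ • v) = 1 := by
    rw [sNorm_smul, hnorm, inv_mul_cancel₀ hv.ne']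
  have hle := le_csSup hbdd ⟨_, hunit, rfl⟩
  rw [map_smul, sNorm_smul, hnorm, inv_mul_le_iff₀ hv] at hle
  rwa [mul_comm]

lemma norm_sInner_apply_le (hA : A.IsPositive) {T : E →L[ℂ] E} (hT : ABounded A T) (x y : E) :
    ‖sInner A (T x) y‖ ≤ opSNorm A T * sNorm A x * sNorm A y :=
  (norm_sInner_le hA _ _).trans
    (mul_le_mul_of_nonneg_right (sNorm_apply_le_opSNorm_mul hT x) (sNorm_nonneg A y))

end SemiInner

section Block

variable {H : Type*} [NormedAddCommGroup H] [InnerProductSpace ℂ H]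

@[simp]
lemma blk_apply_fst (T X Y S : H →L[ℂ] H) (z : WithLp 2 (H × H)) :
    (blk T X Y S z).fst = T z.fst + X z.snd := rfl

@[simp]
lemma blk_apply_snd (T X Y S : H →L[ℂ] H) (z : WithLp 2 (H × H)) :
    (blk T X Y S z).snd = Y z.fst + S z.snd := rfl

lemma sInner_twoA (A : H →L[ℂ] H) (u v : WithLp 2 (H × H)) :
    sInner (twoA A) u v = sInner A u.fst v.fst + sInner A u.snd v.snd := by
  simp [sInner, twoA, WithLp.prod_inner_apply]

lemma sNorm_twoA {A : H →L[ℂ] H} (hA : A.IsPositive) (z : WithLp 2 (H × H)) :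
    sNorm (twoA A) z = √(sNorm A z.fst ^ 2 + sNorm A z.snd ^ 2) := by
  rw [sNorm, sInner_twoA, Complex.add_re, sNorm_sq hA, sNorm_sq hA]

lemma sInner_twoA_blk_antidiag (A X Y : H →L[ℂ] H) (z : WithLp 2 (H × H)) :
    sInner (twoA A) (blk 0 X Y 0 z) z = sInner A (X z.snd) z.fst + sInner A (Y z.fst) z.snd := by
  simp [sInner_twoA]

end Block

theorem stmt2_general {H : Type*} [NormedAddCommGroup H] [InnerProductSpace ℂ H]
    (A : H →L[ℂ] H) (hA : A.IsPositive)
    (X Y : H →L[ℂ] H) (hX : ABounded A X) (hY : ABounded A Y) :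
    numRad (twoA A) (blk 0 X Y 0) ≤ (opSNorm A X + opSNorm A Y) / 2 := by
  have hXY : 0 ≤ opSNorm A X + opSNorm A Y := add_nonneg (opSNorm_nonneg A X) (opSNorm_nonneg A Y)
  refine Real.sSup_le ?_ (by positivity)
  rintro _ ⟨z, hz, rfl⟩
  set a := sNorm A z.fst
  set b := sNorm A z.snd
  have hab : a ^ 2 + b ^ 2 = 1 := by rwa [sNorm_twoA hA, Real.sqrt_eq_one] at hz
  calc ‖sInner (twoA A) (blk 0 X Y 0 z) z‖
      ≤ ‖sInner A (X z.snd) z.fst‖ + ‖sInner A (Y z.fst) z.snd‖ := by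
        rw [sInner_twoA_blk_antidiag]; exact norm_add_le _ _
    _ ≤ opSNorm A X * b * a + opSNorm A Y * a * b :=
        add_le_add (norm_sInner_apply_le hA hX _ _) (norm_sInner_apply_le hA hY _ _)
    _ = (opSNorm A X + opSNorm A Y) * (a * b) := by ring
    _ ≤ (opSNorm A X + opSNorm A Y) * (1 / 2) := by
        gcongr; linarith [two_mul_le_add_sq a b]
    _ = (opSNorm A X + opSNorm A Y) / 2 := by ring

theorem stmt2 {H : Type*} [NormedAddCommGroup H] [InnerProductSpace ℂ H] [CompleteSpace H]
    (A : H →L[ℂ] H) (hA : A.IsPositive)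
    (X Y : H →L[ℂ] H) (hX : ABounded A X) (hY : ABounded A Y)
    (hXadm : ∃ Xs : H →L[ℂ] H, A.comp Xs = (ContinuousLinearMap.adjoint X).comp A)
    (hYadm : ∃ Ys : H →L[ℂ] H, A.comp Ys = (ContinuousLinearMap.adjoint Y).comp A) :
    numRad (twoA A) (blk 0 X Y 0) ≤ (opSNorm A X + opSNorm A Y) / 2 :=
  stmt2_general A hA X Y hX hY
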